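/- arXiv:2106.12681 — 9 statements merged into one kernel-verified Lean document; each statement's English description precedes it below -/
import Mathlib

section
/- Every consistent conical geodesic bicombing is convex: if σ is a conical geodesic bicombing on (X,d) satisfying σ(σ(x,y,r), σ(x,y,s), t) = σ(x,y,(1−t)r + ts) for all x,y ∈ X and r,s,t ∈ [0,1] with r < s, then for all a,b,c,d ∈ X the map t ↦ d(σ(a,b,t), σ(c,d,t)) is convex on [0,1]. -/
/-- Every consistent conical geodesic bicombing is convex. -/
theorem consistent_conical_bicombing_is_convex {X : Type*} [MetricSpace X]
    (σ : X → X → ℝ → X)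
    (h0 : ∀ x y, σ x y 0 = x) (h1 : ∀ x y, σ x y 1 = y)
    (hgeo : ∀ x y, ∀ s ∈ Set.Icc (0:ℝ) 1, ∀ t ∈ Set.Icc (0:ℝ) 1,
      dist (σ x y s) (σ x y t) = |t - s| * dist x y)
    (hconical : ∀ a b c d : X, ∀ t ∈ Set.Icc (0:ℝ) 1,
      dist (σ a b t) (σ c d t) ≤ (1 - t) * dist a c + t * dist b d)
    (hconsistent : ∀ x y : X, ∀ r ∈ Set.Icc (0:ℝ) 1, ∀ s ∈ Set.Icc (0:ℝ) 1,
      ∀ t ∈ Set.Icc (0:ℝ) 1, r < s →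
      σ (σ x y r) (σ x y s) t = σ x y ((1 - t) * r + t * s)) :
    ∀ a b c d : X,
      ConvexOn ℝ (Set.Icc (0:ℝ) 1) (fun t => dist (σ a b t) (σ c d t)) := by
  intro a b c d
  refine ⟨convex_Icc 0 1, ?_⟩
  intro x hx y hy p q hp hq hpq
  simp only [smul_eq_mul]
  rcases lt_trichotomy x y with hxy | hxy | hxy
  · have hq1 : q ∈ Set.Icc (0:ℝ) 1 := ⟨hq, by linarith⟩
    have hp' : p = 1 - q := by linarith
    have e1 : σ a b (p * x + q * y) = σ (σ a b x) (σ a b y) q := by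
      rw [hconsistent a b x hx y hy q hq1 hxy, hp']
    have e2 : σ c d (p * x + q * y) = σ (σ c d x) (σ c d y) q := by
      rw [hconsistent c d x hx y hy q hq1 hxy, hp']
    rw [e1, e2]
    calc dist (σ (σ a b x) (σ a b y) q) (σ (σ c d x) (σ c d y) q)
        ≤ (1 - q) * dist (σ a b x) (σ c d x) + q * dist (σ a b y) (σ c d y) :=
          hconical _ _ _ _ q hq1
      _ = p * dist (σ a b x) (σ c d x) + q * dist (σ a b y) (σ c d y) := by rw [hp']
  · subst hxy
    have : p * x + q * x = x := by linear_combination x * hpq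
    rw [this]
    nlinarith [dist_nonneg (x := σ a b x) (y := σ c d x)]
  · have hp1 : p ∈ Set.Icc (0:ℝ) 1 := ⟨hp, by linarith⟩
    have hq' : q = 1 - p := by linarith
    have hyx : y < x := hxy
    have e0 : p * x + q * y = (1 - p) * y + p * x := by rw [hq']; ring
    have e1 : σ a b (p * x + q * y) = σ (σ a b y) (σ a b x) p := by
      rw [hconsistent a b y hy x hx p hp1 hyx, e0]
    have e2 : σ c d (p * x + q * y) = σ (σ c d y) (σ c d x) p := by
      rw [hconsistent c d y hy x hx p hp1 hyx, e0]
    rw [e1, e2]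
    calc dist (σ (σ a b y) (σ a b x) p) (σ (σ c d y) (σ c d x) p)
        ≤ (1 - p) * dist (σ a b y) (σ c d y) + p * dist (σ a b x) (σ c d x) :=
          hconical _ _ _ _ p hp1
      _ = p * dist (σ a b x) (σ c d x) + q * dist (σ a b y) (σ c d y) := by
          rw [hq']; ring
end

section
/- If σ is a conical geodesic bicombing on (X,d) and B ⊆ X is nonempty, then for every ε > 0 the closed ε-neighborhood N_ε(cco(B)) of the closed convex hull of B is σ-convex, i.e., for all x₁, x₂ ∈ N_ε(cco(B)) and t ∈ [0,1], σ(x₁,x₂,t) ∈ N_ε(cco(B)). -/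
/-- A set is σ-convex if it is closed under the bicombing σ for t ∈ [0,1]. -/
def SigmaConvex {X : Type*} [MetricSpace X] (σ : X → X → ℝ → X) (C : Set X) : Prop :=
  ∀ x ∈ C, ∀ y ∈ C, ∀ t ∈ Set.Icc (0:ℝ) 1, σ x y t ∈ C

/-- Closed σ-convex hull: intersection of all closed σ-convex sets containing A. -/
def cco {X : Type*} [MetricSpace X] (σ : X → X → ℝ → X) (A : Set X) : Set X :=
  ⋂₀ {C : Set X | IsClosed C ∧ SigmaConvex σ C ∧ A ⊆ C}

/-- Closed ε-neighborhood of a set. -/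
def closedNbhd {X : Type*} [MetricSpace X] (A : Set X) (ε : ℝ) : Set X :=
  {x : X | Metric.infDist x A ≤ ε}

/-- for a conical bicombing σ and nonempty B, the closed
ε-neighborhood of cco(B) is σ-convex. -/
theorem closedNbhd_cco_sigmaConvex {X : Type*} [MetricSpace X]
    (σ : X → X → ℝ → X)
    (h0 : ∀ x y, σ x y 0 = x) (h1 : ∀ x y, σ x y 1 = y)
    (hgeo : ∀ x y, ∀ s ∈ Set.Icc (0:ℝ) 1, ∀ t ∈ Set.Icc (0:ℝ) 1,
      dist (σ x y s) (σ x y t) = |t - s| * dist x y)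
    (hconical : ∀ a b c d : X, ∀ t ∈ Set.Icc (0:ℝ) 1,
      dist (σ a b t) (σ c d t) ≤ (1 - t) * dist a c + t * dist b d)
    (B : Set X) (hB : B.Nonempty) (ε : ℝ) (hε : 0 < ε) :
    SigmaConvex σ (closedNbhd (cco σ B) ε) := by
  intro x₁ hx₁ x₂ hx₂ t ht
  set C := cco σ B with hC
  have hCconv : SigmaConvex σ C := by
    intro a ha b hb s hs
    intro D hD
    exact hD.2.1 a (ha D hD) b (hb D hD) s hs
  have hBC : B ⊆ C := fun b hb => Set.mem_sInter.2 fun D hD => hD.2.2 hb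
  have hCne : C.Nonempty := hB.mono hBC
  show Metric.infDist (σ x₁ x₂ t) C ≤ ε
  refine le_of_forall_pos_le_add fun δ hδ => ?_
  have h₁ : Metric.infDist x₁ C < ε + δ := lt_of_le_of_lt hx₁ (by linarith)
  have h₂ : Metric.infDist x₂ C < ε + δ := lt_of_le_of_lt hx₂ (by linarith)
  obtain ⟨y₁, hy₁, hd₁⟩ := (Metric.infDist_lt_iff hCne).mp h₁
  obtain ⟨y₂, hy₂, hd₂⟩ := (Metric.infDist_lt_iff hCne).mp h₂
  have hmem : σ y₁ y₂ t ∈ C := hCconv y₁ hy₁ y₂ hy₂ t ht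
  have hle := Metric.infDist_le_dist_of_mem (x := σ x₁ x₂ t) hmem
  have hcon := hconical x₁ x₂ y₁ y₂ t ht
  have ht0 : (0:ℝ) ≤ t := ht.1
  have ht1 : (1:ℝ) - t ≥ 0 := by linarith [ht.2]
  have : (1 - t) * dist x₁ y₁ + t * dist x₂ y₂ ≤ ε + δ := by
    nlinarith [dist_nonneg (x := x₁) (y := y₁), dist_nonneg (x := x₂) (y := y₂)]
  linarith
end

section
/- If X is a metric space admitting a conical geodesic bicombing σ, then for any nonempty sets A, B ⊆ X, the Hausdorff distance between the closed convex hulls satisfies d_H(cco(A), cco(B)) ≤ d_H(A,B). -/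
open Metric

section

variable {X : Type*} [MetricSpace X] {σ : X → X → ℝ → X}

theorem subset_cco (A : Set X) : A ⊆ cco σ A :=
  fun _ hx => Set.mem_sInter.2 fun _ hC => hC.2.2 hx

theorem cco_subset_of_isClosed {A C : Set X} (hC : IsClosed C) (hσC : SigmaConvex σ C)
    (hAC : A ⊆ C) : cco σ A ⊆ C :=
  Set.sInter_subset_of_mem ⟨hC, hσC, hAC⟩

theorem sigmaConvex_cco (A : Set X) : SigmaConvex σ (cco σ A) :=
  fun _ hx _ hy t ht => Set.mem_sInter.2 fun C hC => hC.2.1 _ (hx C hC) _ (hy C hC) t ht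

theorem edist_bicombing_le_max
    (hσ : ∀ a b c d : X, ∀ t ∈ Set.Icc (0:ℝ) 1,
      dist (σ a b t) (σ c d t) ≤ (1 - t) * dist a c + t * dist b d)
    (a b c d : X) {t : ℝ} (ht : t ∈ Set.Icc (0:ℝ) 1) :
    edist (σ a b t) (σ c d t) ≤ max (edist a c) (edist b d) := by
  have hdist : dist (σ a b t) (σ c d t) ≤ max (dist a c) (dist b d) := by
    have hac := le_max_left (dist a c) (dist b d)
    have hbd := le_max_right (dist a c) (dist b d)
    nlinarith [hσ a b c d t ht, ht.1, ht.2]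
  simpa only [edist_dist, ENNReal.ofReal_max] using ENNReal.ofReal_le_ofReal hdist

theorem SigmaConvex.setOf_infEDist_lt
    (hσ : ∀ a b c d : X, ∀ t ∈ Set.Icc (0:ℝ) 1,
      dist (σ a b t) (σ c d t) ≤ (1 - t) * dist a c + t * dist b d)
    {S : Set X} (hS : SigmaConvex σ S) (r : ENNReal) :
    SigmaConvex σ {x | infEDist x S < r} := by
  intro x hx y hy t ht
  obtain ⟨a, haS, hxa⟩ := infEDist_lt_iff.1 hx
  obtain ⟨b, hbS, hyb⟩ := infEDist_lt_iff.1 hy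
  calc infEDist (σ x y t) S ≤ edist (σ x y t) (σ a b t) :=
        infEDist_le_edist_of_mem (hS a haS b hbS t ht)
    _ ≤ max (edist x a) (edist y b) := edist_bicombing_le_max hσ x y a b ht
    _ < r := max_lt hxa hyb

theorem SigmaConvex.setOf_infEDist_le
    (hσ : ∀ a b c d : X, ∀ t ∈ Set.Icc (0:ℝ) 1,
      dist (σ a b t) (σ c d t) ≤ (1 - t) * dist a c + t * dist b d)
    {S : Set X} (hS : SigmaConvex σ S) (r : ENNReal) :
    SigmaConvex σ {x | infEDist x S ≤ r} :=
  fun x hx y hy t ht => le_of_forall_gt fun r' hr' =>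
    hS.setOf_infEDist_lt hσ r' x (hx.trans_lt hr') y (hy.trans_lt hr') t ht

theorem infEDist_cco_le_hausdorffEDist
    (hσ : ∀ a b c d : X, ∀ t ∈ Set.Icc (0:ℝ) 1,
      dist (σ a b t) (σ c d t) ≤ (1 - t) * dist a c + t * dist b d)
    (A B : Set X) {x : X} (hx : x ∈ cco σ A) :
    infEDist x (cco σ B) ≤ hausdorffEDist A B := by
  refine cco_subset_of_isClosed ?_ ((sigmaConvex_cco B).setOf_infEDist_le hσ _) ?_ hx
  · exact isClosed_le continuous_infEDist continuous_const
  · exact fun a ha => (infEDist_anti (subset_cco B)).trans (infEDist_le_hausdorffEDist_of_mem ha)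

end

theorem hausdorffEdist_cco_le_general {X : Type*} [MetricSpace X]
    (σ : X → X → ℝ → X)
    (hconical : ∀ a b c d : X, ∀ t ∈ Set.Icc (0:ℝ) 1,
      dist (σ a b t) (σ c d t) ≤ (1 - t) * dist a c + t * dist b d)
    (A B : Set X) :
    EMetric.hausdorffEdist (cco σ A) (cco σ B) ≤ EMetric.hausdorffEdist A B :=
  hausdorffEDist_le_of_infEDist (fun _ => infEDist_cco_le_hausdorffEDist hconical A B)
    fun _ hx => (infEDist_cco_le_hausdorffEDist hconical B A hx).trans_eq hausdorffEDist_comm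

/-- for a conical bicombing, d_H(cco A, cco B) ≤ d_H(A, B)
(Hausdorff distance taken in the extended reals, covering the infinite case). -/
theorem hausdorffEdist_cco_le {X : Type*} [MetricSpace X]
    (σ : X → X → ℝ → X)
    (h0 : ∀ x y, σ x y 0 = x) (h1 : ∀ x y, σ x y 1 = y)
    (hgeo : ∀ x y, ∀ s ∈ Set.Icc (0:ℝ) 1, ∀ t ∈ Set.Icc (0:ℝ) 1,
      dist (σ x y s) (σ x y t) = |t - s| * dist x y)
    (hconical : ∀ a b c d : X, ∀ t ∈ Set.Icc (0:ℝ) 1,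
      dist (σ a b t) (σ c d t) ≤ (1 - t) * dist a c + t * dist b d)
    (A B : Set X) (hA : A.Nonempty) (hB : B.Nonempty) :
    EMetric.hausdorffEdist (cco σ A) (cco σ B) ≤ EMetric.hausdorffEdist A B :=
  hausdorffEdist_cco_le_general σ hconical A B
end

section
/- Let X be a metric space with a consistent convex geodesic bicombing σ. For nonempty closed bounded σ-convex sets A, B and t ∈ [0,1], the set Σ(A,B,t) = cco(⋃_{a∈A} ⋃_{b∈B} {σ(a,b,t)}) is bounded, with diameter at most diam(A) + diam(B). -/
/-- Σ(A,B,t) is bounded with diameter at most diam(A) + diam(B). -/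
theorem cco_union_bounded {X : Type*} [MetricSpace X]
    (σ : X → X → ℝ → X)
    (h0 : ∀ x y, σ x y 0 = x) (h1 : ∀ x y, σ x y 1 = y)
    (hgeo : ∀ x y, ∀ s ∈ Set.Icc (0:ℝ) 1, ∀ t ∈ Set.Icc (0:ℝ) 1,
      dist (σ x y s) (σ x y t) = |t - s| * dist x y)
    (hconvex : ∀ a b c d : X,
      ConvexOn ℝ (Set.Icc (0:ℝ) 1) (fun t => dist (σ a b t) (σ c d t)))
    (hconsistent : ∀ x y : X, ∀ r ∈ Set.Icc (0:ℝ) 1, ∀ s ∈ Set.Icc (0:ℝ) 1,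
      ∀ t ∈ Set.Icc (0:ℝ) 1, r < s →
      σ (σ x y r) (σ x y s) t = σ x y ((1 - t) * r + t * s))
    (A B : Set X)
    (hAne : A.Nonempty) (hAcl : IsClosed A) (hAbd : Bornology.IsBounded A)
    (hAcv : SigmaConvex σ A)
    (hBne : B.Nonempty) (hBcl : IsClosed B) (hBbd : Bornology.IsBounded B)
    (hBcv : SigmaConvex σ B)
    (t : ℝ) (ht : t ∈ Set.Icc (0:ℝ) 1) :
    Bornology.IsBounded (cco σ (⋃ a ∈ A, ⋃ b ∈ B, {σ a b t})) ∧
      Metric.diam (cco σ (⋃ a ∈ A, ⋃ b ∈ B, {σ a b t})) ≤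
        Metric.diam A + Metric.diam B := by
  classical
  set S : Set X := ⋃ a ∈ A, ⋃ b ∈ B, {σ a b t} with hS
  set D : ℝ := Metric.diam A + Metric.diam B with hD
  have hD0 : 0 ≤ D := add_nonneg Metric.diam_nonneg Metric.diam_nonneg
  -- σ y y s = y
  have hself : ∀ y : X, ∀ s ∈ Set.Icc (0:ℝ) 1, σ y y s = y := by
    intro y s hs
    have := hgeo y y 0 (by constructor <;> norm_num) s hs
    rw [h0, dist_self, mul_zero] at this
    exact (dist_eq_zero.mp this).symm
  -- key convexity inequality
  have hkey : ∀ a b c d : X, ∀ s ∈ Set.Icc (0:ℝ) 1,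
      dist (σ a b s) (σ c d s) ≤ (1 - s) * dist a c + s * dist b d := by
    intro a b c d s hs
    have hcx := (hconvex a b c d).2
    have h := hcx (Set.left_mem_Icc.mpr zero_le_one)
      (Set.right_mem_Icc.mpr zero_le_one) (a := 1 - s) (b := s)
      (by linarith [hs.2]) hs.1 (by ring)
    simpa [h0, h1, smul_eq_mul] using h
  -- distance to a point
  have hpoint : ∀ a b y : X, ∀ s ∈ Set.Icc (0:ℝ) 1,
      dist (σ a b s) y ≤ (1 - s) * dist a y + s * dist b y := by
    intro a b y s hs
    have := hkey a b y y s hs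
    rwa [hself y s hs] at this
  -- S has diameter ≤ D
  have hSdiam : ∀ p ∈ S, ∀ q ∈ S, dist p q ≤ D := by
    intro p hp q hq
    simp only [hS, Set.mem_iUnion, Set.mem_singleton_iff] at hp hq
    obtain ⟨a, ha, b, hb, rfl⟩ := hp
    obtain ⟨a', ha', b', hb', rfl⟩ := hq
    have h1' : dist a a' ≤ Metric.diam A := Metric.dist_le_diam_of_mem hAbd ha ha'
    have h2' : dist b b' ≤ Metric.diam B := Metric.dist_le_diam_of_mem hBbd hb hb'
    have := hkey a b a' b' t ht
    have ht0 := ht.1; have ht1 := ht.2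
    nlinarith [Metric.diam_nonneg (s := A), Metric.diam_nonneg (s := B)]
  -- S nonempty
  obtain ⟨a0, ha0⟩ := hAne
  obtain ⟨b0, hb0⟩ := hBne
  have hp0 : σ a0 b0 t ∈ S := by
    simp only [hS, Set.mem_iUnion, Set.mem_singleton_iff]
    exact ⟨a0, ha0, b0, hb0, rfl⟩
  -- generic: sets of the form {x | ∀ y ∈ T, dist x y ≤ D} are closed and σ-convex
  have hCcl : ∀ T : Set X, IsClosed {x : X | ∀ y ∈ T, dist x y ≤ D} := by
    intro T
    have : {x : X | ∀ y ∈ T, dist x y ≤ D} = ⋂ y ∈ T, {x | dist x y ≤ D} := by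
      ext x; simp
    rw [this]
    exact isClosed_biInter fun y _ => isClosed_le (by continuity) continuous_const
  have hCcv : ∀ T : Set X, SigmaConvex σ {x : X | ∀ y ∈ T, dist x y ≤ D} := by
    intro T x hx x' hx' s hs y hy
    have := hpoint x x' y s hs
    have hx1 := hx y hy
    have hx2 := hx' y hy
    have hs0 := hs.1; have hs1 := hs.2
    nlinarith
  -- cco S ⊆ C₁
  have hsub : S ⊆ cco σ S := fun x hx C hC => hC.2.2 hx
  have hC1 : cco σ S ⊆ {x : X | ∀ y ∈ S, dist x y ≤ D} := by
    intro x hx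
    exact hx _ ⟨hCcl S, hCcv S, fun p hp q hq => hSdiam p hp q hq⟩
  have hC2 : cco σ S ⊆ {x : X | ∀ y ∈ cco σ S, dist x y ≤ D} := by
    intro x hx
    refine hx _ ⟨hCcl _, hCcv _, ?_⟩
    intro p hp y hy
    rw [dist_comm]
    exact hC1 hy p hp
  have hfin : ∀ x ∈ cco σ S, ∀ y ∈ cco σ S, dist x y ≤ D := by
    intro x hx y hy
    exact hC2 hx y hy
  constructor
  · have : cco σ S ⊆ Metric.closedBall (σ a0 b0 t) D := by
      intro x hx
      exact hfin x hx _ (hsub hp0)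
    exact Metric.isBounded_closedBall.subset this
  · exact Metric.diam_le_of_forall_dist_le hD0 hfin
end

section
/- Let X be a metric space with a conical geodesic bicombing σ. For A,B,C,D nonempty bounded subsets of X and t ∈ [0,1], set U_t = ⋃_{a∈A} ⋃_{b∈B} {σ(a,b,t)} and V_t = ⋃_{c∈C} ⋃_{d∈D} {σ(c,d,t)}. Then d_H(U_t, V_t) ≤ (1−t)·d_H(A,C) + t·d_H(B,D). -/
/-- conical inequality for the union sets U_t, V_t. -/
theorem hausdorffDist_union_le {X : Type*} [MetricSpace X]
    (σ : X → X → ℝ → X)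
    (h0 : ∀ x y, σ x y 0 = x) (h1 : ∀ x y, σ x y 1 = y)
    (hgeo : ∀ x y, ∀ s ∈ Set.Icc (0:ℝ) 1, ∀ t ∈ Set.Icc (0:ℝ) 1,
      dist (σ x y s) (σ x y t) = |t - s| * dist x y)
    (hconical : ∀ a b c d : X, ∀ t ∈ Set.Icc (0:ℝ) 1,
      dist (σ a b t) (σ c d t) ≤ (1 - t) * dist a c + t * dist b d)
    (A B C D : Set X)
    (hA : A.Nonempty) (hAbd : Bornology.IsBounded A)
    (hB : B.Nonempty) (hBbd : Bornology.IsBounded B)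
    (hC : C.Nonempty) (hCbd : Bornology.IsBounded C)
    (hD : D.Nonempty) (hDbd : Bornology.IsBounded D)
    (t : ℝ) (ht : t ∈ Set.Icc (0:ℝ) 1) :
    Metric.hausdorffDist (⋃ a ∈ A, ⋃ b ∈ B, {σ a b t})
        (⋃ c ∈ C, ⋃ d ∈ D, {σ c d t}) ≤
      (1 - t) * Metric.hausdorffDist A C + t * Metric.hausdorffDist B D := by
  obtain ⟨ht0, ht1⟩ := ht
  have ht' : (0:ℝ) ≤ 1 - t := by linarith
  -- key general claim
  have key : ∀ (A' B' C' D' : Set X), A'.Nonempty → Bornology.IsBounded A' →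
      B'.Nonempty → Bornology.IsBounded B' → C'.Nonempty → Bornology.IsBounded C' →
      D'.Nonempty → Bornology.IsBounded D' →
      ∀ x ∈ (⋃ a ∈ A', ⋃ b ∈ B', {σ a b t}),
      Metric.infDist x (⋃ c ∈ C', ⋃ d ∈ D', {σ c d t}) ≤
        (1 - t) * Metric.hausdorffDist A' C' + t * Metric.hausdorffDist B' D' := by
    intro A' B' C' D' hA' hAbd' hB' hBbd' hC' hCbd' hD' hDbd' x hx
    simp only [Set.mem_iUnion, Set.mem_singleton_iff] at hx
    obtain ⟨a, ha, b, hb, rfl⟩ := hx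
    have hAC : EMetric.hausdorffEdist A' C' ≠ ⊤ :=
      Metric.hausdorffEdist_ne_top_of_nonempty_of_bounded hA' hC' hAbd' hCbd'
    have hBD : EMetric.hausdorffEdist B' D' ≠ ⊤ :=
      Metric.hausdorffEdist_ne_top_of_nonempty_of_bounded hB' hD' hBbd' hDbd'
    refine le_of_forall_pos_le_add ?_
    intro ε hε
    have h1' : Metric.infDist a C' < Metric.hausdorffDist A' C' + ε / 2 :=
      lt_of_le_of_lt (Metric.infDist_le_hausdorffDist_of_mem ha hAC) (by linarith)
    have h2' : Metric.infDist b D' < Metric.hausdorffDist B' D' + ε / 2 :=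
      lt_of_le_of_lt (Metric.infDist_le_hausdorffDist_of_mem hb hBD) (by linarith)
    obtain ⟨c, hc, hdc⟩ := (Metric.infDist_lt_iff hC').1 h1'
    obtain ⟨d, hd, hdd⟩ := (Metric.infDist_lt_iff hD').1 h2'
    have hmem : σ c d t ∈ (⋃ c ∈ C', ⋃ d ∈ D', {σ c d t}) := by
      simp only [Set.mem_iUnion, Set.mem_singleton_iff]
      exact ⟨c, hc, d, hd, rfl⟩
    calc Metric.infDist (σ a b t) (⋃ c ∈ C', ⋃ d ∈ D', {σ c d t})
        ≤ dist (σ a b t) (σ c d t) := Metric.infDist_le_dist_of_mem hmem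
      _ ≤ (1 - t) * dist a c + t * dist b d := hconical a b c d t ⟨ht0, ht1⟩
      _ ≤ (1 - t) * (Metric.hausdorffDist A' C' + ε / 2)
          + t * (Metric.hausdorffDist B' D' + ε / 2) := by
          gcongr <;> linarith
      _ ≤ (1 - t) * Metric.hausdorffDist A' C' + t * Metric.hausdorffDist B' D' + ε := by
          nlinarith
  have hr : 0 ≤ (1 - t) * Metric.hausdorffDist A C + t * Metric.hausdorffDist B D := by
    have := Metric.hausdorffDist_nonneg (s := A) (t := C)
    have := Metric.hausdorffDist_nonneg (s := B) (t := D)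
    positivity
  refine Metric.hausdorffDist_le_of_infDist hr ?_ ?_
  · exact key A B C D hA hAbd hB hBbd hC hCbd hD hDbd
  · intro x hx
    have := key C D A B hC hCbd hD hDbd hA hAbd hB hBbd x hx
    rwa [Metric.hausdorffDist_comm (s := C), Metric.hausdorffDist_comm (s := D)] at this
end

section
/- In a normed space X, for nonempty closed bounded convex subsets A, B and scalars r, s, t ∈ [0,1] with r < s, closure((1−t)·closure((1−r)A+rB) + t·closure((1−s)A+sB)) = closure((1−λ)A + λB) where λ = (1−t)r + ts. -/
open Pointwise

lemma closure_add_closure_subset' {X : Type*} [NormedAddCommGroup X]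
    (s t : Set X) : closure s + closure t ⊆ closure (s + t) := by
  rintro x ⟨a, ha, b, hb, rfl⟩
  exact map_mem_closure₂ continuous_add ha hb
    (fun p hp q hq => Set.add_mem_add hp hq)

/-- the closure/Minkowski-combination identity for closed bounded
convex sets in a normed space. -/
theorem closure_combination_eq {X : Type*} [NormedAddCommGroup X]
    [NormedSpace ℝ X] (A B : Set X)
    (hAne : A.Nonempty) (hAcl : IsClosed A) (hAbd : Bornology.IsBounded A)
    (hAcv : Convex ℝ A)
    (hBne : B.Nonempty) (hBcl : IsClosed B) (hBbd : Bornology.IsBounded B)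
    (hBcv : Convex ℝ B)
    (r s t : ℝ) (hr : r ∈ Set.Icc (0:ℝ) 1) (hs : s ∈ Set.Icc (0:ℝ) 1)
    (ht : t ∈ Set.Icc (0:ℝ) 1) (hrs : r < s) :
    closure ((1 - t) • closure ((1 - r) • A + r • B) +
        t • closure ((1 - s) • A + s • B)) =
      closure ((1 - ((1 - t) * r + t * s)) • A + ((1 - t) * r + t * s) • B) := by
  obtain ⟨hr0, hr1⟩ := hr
  obtain ⟨hs0, hs1⟩ := hs
  obtain ⟨ht0, ht1⟩ := ht
  have key : closure ((1 - t) • closure ((1 - r) • A + r • B) +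
      t • closure ((1 - s) • A + s • B)) =
      closure ((1 - t) • ((1 - r) • A + r • B) + t • ((1 - s) • A + s • B)) := by
    apply le_antisymm
    · apply closure_minimal _ isClosed_closure
      calc (1 - t) • closure ((1 - r) • A + r • B) +
            t • closure ((1 - s) • A + s • B)
          ⊆ closure ((1 - t) • ((1 - r) • A + r • B)) +
            closure (t • ((1 - s) • A + s • B)) :=
            Set.add_subset_add (smul_closure_subset _ _) (smul_closure_subset _ _)
        _ ⊆ _ := closure_add_closure_subset' _ _
    · exact closure_mono (Set.add_subset_add
        (Set.smul_set_mono subset_closure) (Set.smul_set_mono subset_closure))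
  rw [key, smul_add, smul_add, smul_smul, smul_smul, smul_smul, smul_smul]
  have hA : ((1 - t) * (1 - r)) • A + (t * (1 - s)) • A
      = (1 - ((1 - t) * r + t * s)) • A := by
    rw [← hAcv.add_smul (by nlinarith) (by nlinarith)]
    ring_nf
  have hB : ((1 - t) * r) • B + (t * s) • B = ((1 - t) * r + t * s) • B :=
    (hBcv.add_smul (by nlinarith) (by nlinarith)).symm
  have rearr : ((1 - t) * (1 - r)) • A + ((1 - t) * r) • B +
        ((t * (1 - s)) • A + (t * s) • B)
      = (((1 - t) * (1 - r)) • A + (t * (1 - s)) • A) +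
        (((1 - t) * r) • B + (t * s) • B) := by abel
  rw [rearr, hA, hB]
end

section
/- In an ℝ-tree T, a subset is geodesically convex if and only if it is connected. -/
section RTreeAux

variable {T : Type*} [MetricSpace T]

/-- existence hypothesis -/
def RTreeHypE (seg : T → T → Set T) : Prop :=
  ∀ x y : T, ∃ γ : ℝ → T, γ 0 = x ∧ γ (dist x y) = y ∧
      (∀ s ∈ Set.Icc 0 (dist x y), ∀ t ∈ Set.Icc 0 (dist x y),
        dist (γ s) (γ t) = |t - s|) ∧
      seg x y = γ '' Set.Icc 0 (dist x y)

/-- uniqueness hypothesis -/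
def RTreeHypU (seg : T → T → Set T) : Prop :=
  ∀ x y : T, ∀ γ : ℝ → T, γ 0 = x → γ (dist x y) = y →
      (∀ s ∈ Set.Icc 0 (dist x y), ∀ t ∈ Set.Icc 0 (dist x y),
        dist (γ s) (γ t) = |t - s|) →
      γ '' Set.Icc 0 (dist x y) = seg x y

/-- betweenness characterisation of membership in a segment -/
theorem rtree_mem_seg_iff {seg : T → T → Set T} (hE : RTreeHypE seg)
    (hU : RTreeHypU seg) (x y z : T) :
    z ∈ seg x y ↔ dist x z + dist z y = dist x y := by
  obtain ⟨γ, h0, hd, hiso, him⟩ := hE x y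
  constructor
  · intro hz
    rw [him] at hz
    obtain ⟨t, ht, rfl⟩ := hz
    have h1 : dist x (γ t) = t := by
      have := hiso 0 ⟨le_refl 0, dist_nonneg⟩ t ht
      rw [h0] at this
      rw [this, sub_zero, abs_of_nonneg ht.1]
    have h2 : dist (γ t) y = dist x y - t := by
      have := hiso t ht (dist x y) ⟨dist_nonneg, le_refl _⟩
      rw [hd] at this
      rw [this, abs_of_nonneg (by linarith [ht.2])]
    rw [h1, h2]; ring
  · intro h
    obtain ⟨γ₁, g10, g1d, g1iso, g1im⟩ := hE x z
    obtain ⟨γ₂, g20, g2d, g2iso, g2im⟩ := hE z y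
    set d1 := dist x z with hd1
    set d2 := dist z y with hd2
    have hd1n : 0 ≤ d1 := dist_nonneg
    have hd2n : 0 ≤ d2 := dist_nonneg
    set δ : ℝ → T := fun t => if t ≤ d1 then γ₁ t else γ₂ (t - d1) with hδ
    have hδ0 : δ 0 = x := by simp [hδ, hd1n, g10]
    have hδd : δ (dist x y) = y := by
      by_cases hc : dist x y ≤ d1
      · have hz2 : d2 = 0 := by linarith [h.symm.le, hc]
        rw [hd2] at hz2
        have hzy : z = y := dist_eq_zero.mp hz2
        have hdd : dist x y = d1 := by
          rw [← h]; linarith [hz2, hd2]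
        show (if dist x y ≤ d1 then γ₁ (dist x y) else γ₂ (dist x y - d1)) = y
        rw [if_pos hc, hdd, g1d]
        exact hzy
      · simp only [hδ, if_neg hc]
        have : dist x y - d1 = d2 := by linarith
        rw [this, g2d]
    -- isometric parametrisation of δ
    have key : ∀ s ∈ Set.Icc (0:ℝ) (dist x y), ∀ t ∈ Set.Icc (0:ℝ) (dist x y),
        s ≤ t → dist (δ s) (δ t) = t - s := by
      intro s hs t ht hst
      by_cases hs1 : s ≤ d1
      · by_cases ht1 : t ≤ d1
        · simp only [hδ, if_pos hs1, if_pos ht1]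
          rw [g1iso s ⟨hs.1, hs1⟩ t ⟨ht.1, ht1⟩, abs_of_nonneg (by linarith)]
        · push_neg at ht1
          simp only [hδ, if_pos hs1, if_neg (not_le.mpr ht1)]
          have htIcc : t - d1 ∈ Set.Icc (0:ℝ) d2 := ⟨by linarith, by linarith [ht.2, h]⟩
          have h1 : dist (γ₁ s) z = d1 - s := by
            have := g1iso s ⟨hs.1, hs1⟩ d1 ⟨hd1n, le_refl _⟩
            rw [g1d] at this
            rw [this, abs_of_nonneg (by linarith)]
          have h2 : dist z (γ₂ (t - d1)) = t - d1 := by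
            have := g2iso 0 ⟨le_refl 0, hd2n⟩ (t - d1) htIcc
            rw [g20] at this
            rw [this, sub_zero, abs_of_nonneg htIcc.1]
          have h3 : dist (γ₂ (t - d1)) y = d2 - (t - d1) := by
            have := g2iso (t - d1) htIcc d2 ⟨hd2n, le_refl _⟩
            rw [g2d] at this
            rw [this, abs_of_nonneg (by linarith [htIcc.2])]
          have h4 : dist x (γ₁ s) = s := by
            have := g1iso 0 ⟨le_refl 0, hd1n⟩ s ⟨hs.1, hs1⟩
            rw [g10] at this
            rw [this, sub_zero, abs_of_nonneg hs.1]
          have hub : dist (γ₁ s) (γ₂ (t - d1)) ≤ t - s := by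
            calc dist (γ₁ s) (γ₂ (t - d1)) ≤ dist (γ₁ s) z + dist z (γ₂ (t - d1)) :=
                  dist_triangle _ _ _
              _ = t - s := by rw [h1, h2]; ring
          have hlb : t - s ≤ dist (γ₁ s) (γ₂ (t - d1)) := by
            have := dist_triangle4 x (γ₁ s) (γ₂ (t - d1)) y
            rw [h4, h3, ← h] at this
            linarith
          linarith
      · push_neg at hs1
        have ht1 : ¬ t ≤ d1 := by push_neg; linarith
        simp only [hδ, if_neg (not_le.mpr hs1), if_neg ht1]
        push_neg at ht1
        have hsIcc : s - d1 ∈ Set.Icc (0:ℝ) d2 := ⟨by linarith, by linarith [hs.2, h]⟩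
        have htIcc : t - d1 ∈ Set.Icc (0:ℝ) d2 := ⟨by linarith, by linarith [ht.2, h]⟩
        rw [g2iso _ hsIcc _ htIcc]
        rw [abs_of_nonneg (by linarith)]
        ring
    have hiso' : ∀ s ∈ Set.Icc (0:ℝ) (dist x y), ∀ t ∈ Set.Icc (0:ℝ) (dist x y),
        dist (δ s) (δ t) = |t - s| := by
      intro s hs t ht
      rcases le_total s t with hle | hle
      · rw [key s hs t ht hle, abs_of_nonneg (by linarith)]
      · rw [dist_comm, key t ht s hs hle, abs_of_nonpos (by linarith), neg_sub]
    have him := hU x y δ hδ0 hδd hiso'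
    rw [← him]
    refine ⟨d1, ⟨hd1n, by linarith⟩, ?_⟩
    simp [hδ, g1d]

theorem rtree_endpoint_left {seg : T → T → Set T} (hE : RTreeHypE seg)
    (hU : RTreeHypU seg) (x y : T) : x ∈ seg x y := by
  rw [rtree_mem_seg_iff hE hU]; simp

theorem rtree_endpoint_right {seg : T → T → Set T} (hE : RTreeHypE seg)
    (hU : RTreeHypU seg) (x y : T) : y ∈ seg x y := by
  rw [rtree_mem_seg_iff hE hU]; simp

theorem rtree_seg_symm {seg : T → T → Set T} (hE : RTreeHypE seg)
    (hU : RTreeHypU seg) (x y : T) : seg x y = seg y x := by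
  ext z
  rw [rtree_mem_seg_iff hE hU, rtree_mem_seg_iff hE hU, dist_comm x z, dist_comm z y,
    dist_comm x y]
  constructor <;> intro h <;> linarith

/-- distances between two points of a segment -/
theorem rtree_dist_of_mem {seg : T → T → Set T} (hE : RTreeHypE seg)
    {x y z m : T} (hz : z ∈ seg x y) (hm : m ∈ seg x y) :
    dist z m = |dist x m - dist x z| := by
  obtain ⟨γ, h0, hd, hiso, him⟩ := hE x y
  rw [him] at hz hm
  obtain ⟨s, hs, rfl⟩ := hz
  obtain ⟨t, ht, rfl⟩ := hm
  have h1 : dist x (γ s) = s := by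
    have := hiso 0 ⟨le_refl 0, dist_nonneg⟩ s hs
    rw [h0] at this; rw [this, sub_zero, abs_of_nonneg hs.1]
  have h2 : dist x (γ t) = t := by
    have := hiso 0 ⟨le_refl 0, dist_nonneg⟩ t ht
    rw [h0] at this; rw [this, sub_zero, abs_of_nonneg ht.1]
  rw [h1, h2, hiso s hs t ht]

/-- sub-segment membership -/
theorem rtree_subseg {seg : T → T → Set T} (hE : RTreeHypE seg) (hU : RTreeHypU seg)
    {x p z m : T} (hz : z ∈ seg x p) (hm : m ∈ seg x p) (hle : dist x z ≤ dist x m) :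
    z ∈ seg x m := by
  have h := rtree_dist_of_mem hE hz hm
  rw [abs_of_nonneg (by linarith)] at h
  rw [rtree_mem_seg_iff hE hU]
  linarith

/-- transitivity -/
theorem rtree_trans {seg : T → T → Set T} (hE : RTreeHypE seg) (hU : RTreeHypU seg)
    {p x m w : T} (hm : m ∈ seg p x) (hw : w ∈ seg m x) :
    w ∈ seg p x ∧ dist p w = dist p m + dist m w := by
  rw [rtree_mem_seg_iff hE hU] at hm hw ⊢
  have h1 : dist p w ≤ dist p m + dist m w := dist_triangle _ _ _
  have h2 : dist p x ≤ dist p w + dist w x := dist_triangle _ _ _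
  constructor <;> linarith

theorem rtree_seg_compact {seg : T → T → Set T} (hE : RTreeHypE seg) (x y : T) :
    IsCompact (seg x y) := by
  obtain ⟨γ, h0, hd, hiso, him⟩ := hE x y
  rw [him]
  apply isCompact_Icc.image_of_continuousOn
  apply LipschitzOnWith.continuousOn (K := 1)
  intro s hs t ht
  rw [edist_dist, edist_dist, hiso s hs t ht]
  simp only [ENNReal.coe_one, one_mul]
  rw [Real.dist_eq, abs_sub_comm]

/-- last common point of two segments from a common endpoint -/
theorem rtree_branch {seg : T → T → Set T} (hE : RTreeHypE seg) (hU : RTreeHypU seg)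
    (p x q : T) :
    ∃ m, m ∈ seg p x ∧ m ∈ seg p q ∧ seg m x ∩ seg m q = {m} := by
  have hScomp : IsCompact (seg p x ∩ seg p q) :=
    ((rtree_seg_compact hE p x).inter_right (rtree_seg_compact hE p q).isClosed)
  have hSne : (seg p x ∩ seg p q).Nonempty :=
    ⟨p, rtree_endpoint_left hE hU p x, rtree_endpoint_left hE hU p q⟩
  obtain ⟨m, hmS, hmax⟩ := hScomp.exists_isMaxOn hSne
    (continuous_const.dist continuous_id).continuousOn (f := fun w => dist p w)
  refine ⟨m, hmS.1, hmS.2, ?_⟩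
  apply Set.eq_singleton_iff_unique_mem.mpr
  refine ⟨⟨rtree_endpoint_left hE hU m x, rtree_endpoint_left hE hU m q⟩, ?_⟩
  rintro w ⟨hw1, hw2⟩
  obtain ⟨hwpx, hdx⟩ := rtree_trans hE hU hmS.1 hw1
  obtain ⟨hwpq, hdq⟩ := rtree_trans hE hU hmS.2 hw2
  have : dist p w ≤ dist p m := hmax ⟨hwpx, hwpq⟩
  have : dist m w = 0 := by linarith [dist_nonneg (x := m) (y := w)]
  exact (dist_eq_zero.mp (by rw [dist_comm]; exact this))

end RTreeAux

/-- in an ℝ-tree (uniquely geodesic metric space satisfying the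
tree condition), a subset is geodesically convex iff it is connected. -/
theorem rtree_convex_iff_connected {T : Type*} [MetricSpace T]
    (seg : T → T → Set T)
    -- every pair of points is joined by a geodesic whose image is `seg x y`
    (hexists : ∀ x y : T, ∃ γ : ℝ → T, γ 0 = x ∧ γ (dist x y) = y ∧
      (∀ s ∈ Set.Icc 0 (dist x y), ∀ t ∈ Set.Icc 0 (dist x y),
        dist (γ s) (γ t) = |t - s|) ∧
      seg x y = γ '' Set.Icc 0 (dist x y))
    -- uniqueness: any geodesic from x to y has image `seg x y`
    (huniq : ∀ x y : T, ∀ γ : ℝ → T, γ 0 = x → γ (dist x y) = y →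
      (∀ s ∈ Set.Icc 0 (dist x y), ∀ t ∈ Set.Icc 0 (dist x y),
        dist (γ s) (γ t) = |t - s|) →
      γ '' Set.Icc 0 (dist x y) = seg x y)
    -- tree condition
    (htree : ∀ x y z : T, seg x y ∩ seg y z = {y} →
      seg x y ∪ seg y z = seg x z)
    (C : Set T) :
    (∀ x ∈ C, ∀ y ∈ C, seg x y ⊆ C) ↔ IsPreconnected C := by
  have hE : RTreeHypE seg := hexists
  have hU : RTreeHypU seg := huniq
  constructor
  · -- convex → preconnected
    intro hconv
    apply isPreconnected_of_forall_pair
    intro x hx y hy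
    refine ⟨seg x y, hconv x hx y hy, rtree_endpoint_left hE hU x y,
      rtree_endpoint_right hE hU x y, ?_⟩
    obtain ⟨γ, h0, hd, hiso, him⟩ := hE x y
    rw [him]
    apply isPreconnected_Icc.image
    apply LipschitzOnWith.continuousOn (K := 1)
    intro s hs t ht
    rw [edist_dist, edist_dist, hiso s hs t ht]
    simp only [ENNReal.coe_one, one_mul]
    rw [Real.dist_eq, abs_sub_comm]
  · -- preconnected → convex
    intro hC x hx y hy z hz
    by_contra hzC
    have hxz : x ≠ z := fun h => hzC (h ▸ hx)
    have hyz : y ≠ z := fun h => hzC (h ▸ hy)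
    -- the two separating open sets
    set U : Set T := {p | dist x p < dist x z + dist z p} with hUdef
    set V : Set T := {p | z ∈ seg x p ∧ p ≠ z} with hVdef
    have hmemU : ∀ p, p ∈ U ↔ z ∉ seg x p := by
      intro p
      rw [rtree_mem_seg_iff hE hU]
      constructor
      · intro h hc; simp only [hUdef, Set.mem_setOf_eq] at h; linarith
      · intro h
        simp only [hUdef, Set.mem_setOf_eq]
        rcases lt_or_eq_of_le (dist_triangle x z p) with h' | h'
        · exact h'
        · exact absurd h'.symm h
    have hUopen : IsOpen U := by
      have : U = {p | dist x p - (dist x z + dist z p) < 0} := by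
        ext p; simp [hUdef, sub_neg]
      rw [this]
      apply isOpen_lt (by fun_prop) continuous_const
    have hVopen : IsOpen V := by
      rw [Metric.isOpen_iff]
      rintro p ⟨hzp, hpz⟩
      refine ⟨dist z p, dist_pos.mpr (Ne.symm hpz), ?_⟩
      intro q hq
      rw [Metric.mem_ball, dist_comm] at hq
      have hqz : q ≠ z := by
        intro h; subst h
        rw [dist_comm] at hq; exact lt_irrefl _ hq
      refine ⟨?_, hqz⟩
      -- z ∈ seg x q
      obtain ⟨m, hmpx, hmpq, hbr⟩ := rtree_branch hE hU p x q
      -- m is close to p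
      have hpm : dist p m + dist m q = dist p q := (rtree_mem_seg_iff hE hU p q m).mp hmpq
      have hdm : dist p m ≤ dist p q := by linarith [dist_nonneg (x := m) (y := q)]
      -- z lies on seg p x further than m
      have hzpx : z ∈ seg p x := by rw [rtree_seg_symm hE hU]; exact hzp
      -- compare distances from x
      have hz_eq : dist x z + dist z p = dist x p := (rtree_mem_seg_iff hE hU x p z).mp hzp
      have hm_eq : dist p m + dist m x = dist p x := (rtree_mem_seg_iff hE hU p x m).mp hmpx
      have hxm : dist x z ≤ dist x m := by
        have h1 : dist p m < dist p z := by
          rw [dist_comm p z]; exact lt_of_le_of_lt hdm hq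
        have e1 : dist z p = dist p z := dist_comm _ _
        have e2 : dist m x = dist x m := dist_comm _ _
        have e3 : dist p x = dist x p := dist_comm _ _
        linarith
      have hzxm : z ∈ seg x m :=
        rtree_subseg hE hU hzp (by rw [rtree_seg_symm hE hU x p]; exact hmpx) hxm
      have hseg : seg x m ∪ seg m q = seg x q := by
        apply htree
        rw [rtree_seg_symm hE hU x m]
        exact hbr
      rw [← hseg]
      exact Or.inl hzxm
    -- apply preconnectedness
    have hcover : C ⊆ U ∪ V := by
      intro p hp
      by_cases h : z ∈ seg x p
      · right
        exact ⟨h, fun he => hzC (he ▸ hp)⟩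
      · left; exact (hmemU p).mpr h
    have hxU : x ∈ C ∩ U := by
      refine ⟨hx, (hmemU x).mpr ?_⟩
      intro h
      rw [rtree_mem_seg_iff hE hU] at h
      simp only [dist_self] at h
      apply hxz
      apply dist_eq_zero.mp
      have := dist_nonneg (x := z) (y := x)
      rw [dist_comm]
      linarith [dist_nonneg (x := x) (y := z)]
    have hyV : y ∈ C ∩ V := ⟨hy, hz, hyz⟩
    obtain ⟨w, hwC, hwU, hwV⟩ := hC U V hUopen hVopen hcover ⟨x, hxU⟩ ⟨y, hyV⟩
    exact ((hmemU w).mp hwU) hwV.1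
end

section
/- Let X be a proper metric space and A, B nonempty compact subsets. Then the set Z_t = ⋃_{a∈A} ⋃_{u∈P_B(a)} ω(a,u,t) is closed and bounded (hence compact), where P_B(a) = {b ∈ B : d(a,b) = d(a,B)} and ω(a,u,t) = {x ∈ X : d(a,x) = t·d(a,u) and d(x,u) = (1−t)·d(a,u)}. -/
/-- Metric projection onto a set. -/
def metricProj {X : Type*} [MetricSpace X] (B : Set X) (a : X) : Set X :=
  {b ∈ B | dist a b = Metric.infDist a B}

/-- ω(a,b,t): the set of t-fraction metric midpoints between a and b. -/
def omegaSet {X : Type*} [MetricSpace X] (a b : X) (t : ℝ) : Set X :=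
  {x : X | dist a x = t * dist a b ∧ dist x b = (1 - t) * dist a b}

/-- in a proper metric space, Z_t is closed and bounded, hence
compact. -/
theorem Zt_compact {X : Type*} [MetricSpace X] [ProperSpace X]
    (A B : Set X) (hAne : A.Nonempty) (hAcp : IsCompact A)
    (hBne : B.Nonempty) (hBcp : IsCompact B)
    (t : ℝ) (ht : t ∈ Set.Icc (0:ℝ) 1) :
    IsClosed (⋃ a ∈ A, ⋃ u ∈ metricProj B a, omegaSet a u t) ∧
    Bornology.IsBounded (⋃ a ∈ A, ⋃ u ∈ metricProj B a, omegaSet a u t) ∧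
    IsCompact (⋃ a ∈ A, ⋃ u ∈ metricProj B a, omegaSet a u t) := by
  obtain ⟨a0, ha0⟩ := hAne
  set S : Set (X × X × X) :=
    {p | p.1 ∈ A ∧ p.2.1 ∈ B ∧ dist p.1 p.2.1 = Metric.infDist p.1 B ∧
      dist p.1 p.2.2 = t * dist p.1 p.2.1 ∧
      dist p.2.2 p.2.1 = (1 - t) * dist p.1 p.2.1} with hS
  -- S is closed
  have hSclosed : IsClosed S := by
    have h1 : IsClosed {p : X × X × X | p.1 ∈ A} :=
      hAcp.isClosed.preimage continuous_fst
    have h2 : IsClosed {p : X × X × X | p.2.1 ∈ B} :=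
      hBcp.isClosed.preimage (continuous_fst.comp continuous_snd)
    have h3 : IsClosed {p : X × X × X | dist p.1 p.2.1 = Metric.infDist p.1 B} :=
      isClosed_eq (by fun_prop) ((Metric.continuous_infDist_pt B).comp continuous_fst)
    have h4 : IsClosed {p : X × X × X | dist p.1 p.2.2 = t * dist p.1 p.2.1} :=
      isClosed_eq (by fun_prop) (by fun_prop)
    have h5 : IsClosed {p : X × X × X | dist p.2.2 p.2.1 = (1 - t) * dist p.1 p.2.1} :=
      isClosed_eq (by fun_prop) (by fun_prop)
    have : S = {p : X × X × X | p.1 ∈ A} ∩ {p | p.2.1 ∈ B} ∩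
        {p | dist p.1 p.2.1 = Metric.infDist p.1 B} ∩
        {p | dist p.1 p.2.2 = t * dist p.1 p.2.1} ∩
        {p | dist p.2.2 p.2.1 = (1 - t) * dist p.1 p.2.1} := by
      ext p; simp [hS, Set.mem_setOf_eq, and_assoc]
    rw [this]
    exact (((h1.inter h2).inter h3).inter h4).inter h5
  -- S is bounded
  obtain ⟨rA, hrA⟩ := hAcp.isBounded.subset_closedBall a0
  obtain ⟨rB, hrB⟩ := hBcp.isBounded.subset_closedBall a0
  have hSsub : S ⊆ (Metric.closedBall a0 rA) ×ˢ
      (Metric.closedBall a0 rB) ×ˢ (Metric.closedBall a0 (rA + rA + rB)) := by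
    rintro ⟨a, u, x⟩ ⟨haA, huB, -, hdx, -⟩
    have hA' := hrA haA
    have hB' := hrB huB
    simp only [Metric.mem_closedBall] at hA' hB' ⊢
    refine ⟨hA', hB', ?_⟩
    have h1 : dist a x ≤ dist a u := by
      rw [hdx]
      nlinarith [ht.1, ht.2, dist_nonneg (x := a) (y := u)]
    calc dist x a0 ≤ dist x a + dist a a0 := dist_triangle _ _ _
      _ ≤ dist a u + dist a a0 := by rw [dist_comm x a]; linarith
      _ ≤ (dist a a0 + dist a0 u) + dist a a0 := by linarith [dist_triangle a a0 u]
      _ ≤ rA + rA + rB := by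
          rw [dist_comm a a0] at *
          rw [dist_comm a0 u] at *
          linarith [hA', hB']
  have hSbdd : Bornology.IsBounded S :=
    (((Metric.isBounded_closedBall).prod
      ((Metric.isBounded_closedBall).prod Metric.isBounded_closedBall))).subset hSsub
  have hScp : IsCompact S := Metric.isCompact_of_isClosed_isBounded hSclosed hSbdd
  -- Z = image of S under third projection
  have hZ : (⋃ a ∈ A, ⋃ u ∈ metricProj B a, omegaSet a u t) =
      (fun p : X × X × X => p.2.2) '' S := by
    ext x
    simp only [Set.mem_iUnion, Set.mem_image, metricProj, omegaSet, Set.mem_setOf_eq,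
      Set.mem_sep_iff, hS]
    constructor
    · rintro ⟨a, haA, u, ⟨huB, hproj⟩, h1, h2⟩
      exact ⟨⟨a, u, x⟩, ⟨haA, huB, hproj, h1, h2⟩, rfl⟩
    · rintro ⟨⟨a, u, y⟩, ⟨haA, huB, hproj, h1, h2⟩, rfl⟩
      exact ⟨a, haA, u, ⟨huB, hproj⟩, h1, h2⟩
  have hZcp : IsCompact (⋃ a ∈ A, ⋃ u ∈ metricProj B a, omegaSet a u t) := by
    rw [hZ]
    exact hScp.image (by fun_prop)
  exact ⟨hZcp.isClosed, hZcp.isBounded, hZcp⟩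
end

section
/- Let X be a proper metric space admitting a geodesic bicombing. For nonempty compact A, B ⊆ X and t ∈ [0,1], define Σ(A,B,t) = (⋃_{a∈A} ⋃_{u∈P_B(a)} ω(a,u,t)) ∪ (⋃_{b∈B} ⋃_{v∈P_A(b)} ω(v,b,t)). Then Σ(A,B,·) is a linearly reparametrized geodesic from A to B in (K(X), d_H): Σ(A,B,0) = A, Σ(A,B,1) = B, and d_H(Σ(A,B,s), Σ(A,B,t)) = |t−s|·d_H(A,B). -/
/-- The bicombing on K(X) from metric projections and ω. -/
def SigK {X : Type*} [MetricSpace X] (A B : Set X) (t : ℝ) : Set X :=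
  (⋃ a ∈ A, ⋃ u ∈ metricProj B a, omegaSet a u t) ∪
  (⋃ b ∈ B, ⋃ v ∈ metricProj A b, omegaSet v b t)

section

open Metric Set

variable {X : Type*} [MetricSpace X]

section Omega

lemma mem_omegaSet_of_dist_le {a u x : X} {t : ℝ} (hax : dist a x ≤ t * dist a u)
    (hxu : dist x u ≤ (1 - t) * dist a u) : x ∈ omegaSet a u t := by
  have := dist_triangle a x u
  exact ⟨by linarith, by linarith⟩

lemma omegaSet_one_sub (a u : X) (t : ℝ) : omegaSet a u (1 - t) = omegaSet u a t := by
  ext x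
  simp only [omegaSet, mem_ofPred_eq, sub_sub_cancel, dist_comm a u, dist_comm a x, dist_comm x u]
  exact and_comm

lemma omegaSet_zero (a u : X) : omegaSet a u 0 = {a} := by
  ext x
  constructor
  · rintro ⟨hax, -⟩
    exact (dist_eq_zero.1 (by simpa using hax)).symm
  · rintro rfl
    exact ⟨by simp, by simp⟩

lemma mem_omegaSet_of_bicombing {σ : X → X → ℝ → X}
    (h0 : ∀ x y, σ x y 0 = x) (h1 : ∀ x y, σ x y 1 = y)
    (hgeo : ∀ x y, ∀ s ∈ Icc (0:ℝ) 1, ∀ t ∈ Icc (0:ℝ) 1,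
      dist (σ x y s) (σ x y t) = |t - s| * dist x y)
    (x y : X) {t : ℝ} (ht : t ∈ Icc (0:ℝ) 1) : σ x y t ∈ omegaSet x y t := by
  have hx := hgeo x y 0 (left_mem_Icc.2 zero_le_one) t ht
  have hy := hgeo x y t ht 1 (right_mem_Icc.2 zero_le_one)
  rw [h0, sub_zero, abs_of_nonneg ht.1] at hx
  rw [h1, abs_of_nonneg (sub_nonneg.2 ht.2)] at hy
  exact ⟨hx, hy⟩

variable (hω : ∀ x y : X, ∀ t ∈ Icc (0:ℝ) 1, (omegaSet x y t).Nonempty)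
include hω

lemma exists_mem_omegaSet_of_le {a u x : X} {s t : ℝ} (hs : s ∈ Icc (0:ℝ) 1)
    (ht : t ∈ Icc (0:ℝ) 1) (hts : t ≤ s) (hx : x ∈ omegaSet a u s) :
    ∃ y ∈ omegaSet a u t, dist x y ≤ (s - t) * dist a u := by
  obtain ⟨y, hay, hyx⟩ := hω a x (t / s) ⟨div_nonneg ht.1 hs.1, div_le_one_of_le₀ hts hs.1⟩
  -- for `s = 0` also `t = 0`, so the junk value `t / 0 = 0` does no harm
  have hts' : t / s * s = t := div_mul_cancel_of_imp fun h => le_antisymm (h ▸ hts) ht.1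
  have hay' : dist a y = t * dist a u := by rw [hay, hx.1, ← mul_assoc, hts']
  have hyx' : dist y x = (s - t) * dist a u := by
    rw [hyx, hx.1]
    linear_combination (-dist a u) * hts'
  refine ⟨y, mem_omegaSet_of_dist_le hay'.le ?_, (dist_comm x y).trans_le hyx'.le⟩
  calc dist y u ≤ dist y x + dist x u := dist_triangle y x u
    _ = (1 - t) * dist a u := by rw [hyx', hx.2]; ring

lemma exists_mem_omegaSet_dist_le {a u x : X} {s t : ℝ} (hs : s ∈ Icc (0:ℝ) 1)
    (ht : t ∈ Icc (0:ℝ) 1) (hx : x ∈ omegaSet a u s) :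
    ∃ y ∈ omegaSet a u t, dist x y ≤ |t - s| * dist a u := by
  rcases le_total t s with hts | hst
  · rw [abs_sub_comm, abs_of_nonneg (sub_nonneg.2 hts)]
    exact exists_mem_omegaSet_of_le hω hs ht hts hx
  · rw [abs_of_nonneg (sub_nonneg.2 hst), ← omegaSet_one_sub u a, ← sub_sub_sub_cancel_left s t 1,
      dist_comm]
    rw [← omegaSet_one_sub u a] at hx
    exact exists_mem_omegaSet_of_le hω (Icc.mem_iff_one_sub_mem.1 hs)
      (Icc.mem_iff_one_sub_mem.1 ht) (by linarith) hx

end Omega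

def projPairs (A B : Set X) : Set (X × X) :=
  {p | p.1 ∈ A ∧ p.2 ∈ metricProj B p.1} ∪ {p | p.2 ∈ B ∧ p.1 ∈ metricProj A p.2}

section SigK

variable {A B : Set X}

lemma projPairs_subset_prod : projPairs A B ⊆ A ×ˢ B := by
  rintro p (⟨ha, hu, -⟩ | ⟨hb, hv, -⟩)
  exacts [⟨ha, hu⟩, ⟨hv, hb⟩]

lemma mem_SigK {t : ℝ} {x : X} :
    x ∈ SigK A B t ↔ ∃ p ∈ projPairs A B, x ∈ omegaSet p.1 p.2 t := by
  simp only [SigK, projPairs, mem_union, mem_iUnion, exists_prop, Prod.exists, mem_ofPred_eq]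
  aesop

variable (A B) in
lemma SigK_one_sub (t : ℝ) : SigK A B (1 - t) = SigK B A t := by
  simp only [SigK, omegaSet_one_sub]
  exact union_comm _ _

lemma metricProj_nonempty (hB : IsCompact B) (hB₀ : B.Nonempty) (a : X) :
    (metricProj B a).Nonempty := by
  obtain ⟨u, hu, hau⟩ := hB.exists_infDist_eq_dist hB₀ a
  exact ⟨u, hu, hau.symm⟩

lemma SigK_zero (hB : IsCompact B) (hB₀ : B.Nonempty) : SigK A B 0 = A := by
  ext x
  simp only [mem_SigK, omegaSet_zero, mem_singleton_iff]
  constructor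
  · rintro ⟨p, hp, rfl⟩
    exact (projPairs_subset_prod hp).1
  · intro hx
    obtain ⟨u, hu⟩ := metricProj_nonempty hB hB₀ x
    exact ⟨(x, u), .inl ⟨hx, hu⟩, rfl⟩

lemma SigK_one (hA : IsCompact A) (hA₀ : A.Nonempty) : SigK A B 1 = B := by
  rw [← sub_zero (1 : ℝ), SigK_one_sub, SigK_zero hA hA₀]

lemma dist_le_hausdorffDist_of_mem_projPairs (hAB : hausdorffEDist A B ≠ ⊤) {p : X × X}
    (hp : p ∈ projPairs A B) : dist p.1 p.2 ≤ hausdorffDist A B := by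
  rcases hp with ⟨ha, -, hu⟩ | ⟨hb, -, hv⟩
  · exact hu ▸ infDist_le_hausdorffDist_of_mem ha hAB
  · rw [dist_comm, hv, hausdorffDist_comm]
    exact infDist_le_hausdorffDist_of_mem hb (by rwa [hausdorffEDist_comm])

lemma SigK_subset_cthickening (hAB : hausdorffEDist A B ≠ ⊤) {t : ℝ} (ht : t ≤ 1) :
    SigK A B t ⊆ cthickening (hausdorffDist A B) A := by
  intro x hx
  obtain ⟨p, hp, hpx, -⟩ := mem_SigK.1 hx
  refine mem_cthickening_of_dist_le x p.1 _ A (projPairs_subset_prod hp).1 ?_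
  calc dist x p.1 = t * dist p.1 p.2 := by rw [dist_comm, hpx]
    _ ≤ 1 * hausdorffDist A B :=
      mul_le_mul ht (dist_le_hausdorffDist_of_mem_projPairs hAB hp) dist_nonneg zero_le_one
    _ = hausdorffDist A B := one_mul _

lemma exists_infDist_eq_hausdorffDist (hA : IsCompact A) (hA₀ : A.Nonempty) (hB : IsCompact B)
    (hB₀ : B.Nonempty) :
    (∃ a ∈ A, infDist a B = hausdorffDist A B) ∨ ∃ b ∈ B, infDist b A = hausdorffDist A B := by
  have hAB := hausdorffEDist_ne_top_of_nonempty_of_bounded hA₀ hB₀ hA.isBounded hB.isBounded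
  obtain ⟨a, ha, hamax⟩ := hA.exists_isMaxOn hA₀ (continuous_infDist_pt B).continuousOn
  obtain ⟨b, hb, hbmax⟩ := hB.exists_isMaxOn hB₀ (continuous_infDist_pt A).continuousOn
  have hle : hausdorffDist A B ≤ max (infDist a B) (infDist b A) :=
    hausdorffDist_le_of_infDist (le_max_of_le_left infDist_nonneg)
      (fun x hx => le_max_of_le_left (hamax hx)) (fun x hx => le_max_of_le_right (hbmax hx))
  have hge : max (infDist a B) (infDist b A) ≤ hausdorffDist A B :=
    max_le (infDist_le_hausdorffDist_of_mem ha hAB)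
      (hausdorffDist_comm (s := B) ▸
        infDist_le_hausdorffDist_of_mem hb (by rwa [hausdorffEDist_comm]))
  rcases max_choice (infDist a B) (infDist b A) with h | h
  · exact .inl ⟨a, ha, h.symm.trans (hge.antisymm hle)⟩
  · exact .inr ⟨b, hb, h.symm.trans (hge.antisymm hle)⟩

lemma sub_mul_le_dist_of_mem_SigK (hAB : hausdorffEDist A B ≠ ⊤) {a u x y : X} {s t : ℝ}
    (hfar : infDist a B = hausdorffDist A B) (hu : u ∈ metricProj B a)
    (hx : x ∈ omegaSet a u s) (hy : y ∈ SigK A B t) (ht : t ≤ 1) :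
    (t - s) * hausdorffDist A B ≤ dist x y := by
  obtain ⟨p, hp, -, hyp⟩ := mem_SigK.1 hy
  have hau : dist a u = hausdorffDist A B := hu.2.trans hfar
  have hap : hausdorffDist A B ≤ dist a p.2 :=
    hfar ▸ infDist_le_dist_of_mem (projPairs_subset_prod hp).2
  have hyp' : dist y p.2 ≤ (1 - t) * hausdorffDist A B :=
    hyp ▸ mul_le_mul_of_nonneg_left (dist_le_hausdorffDist_of_mem_projPairs hAB hp)
      (sub_nonneg.2 ht)
  have := dist_triangle4 a x y p.2
  rw [hx.1, hau] at this
  linarith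

variable (hω : ∀ x y : X, ∀ t ∈ Icc (0:ℝ) 1, (omegaSet x y t).Nonempty)
include hω

lemma SigK_nonempty (hA₀ : A.Nonempty) (hB : IsCompact B) (hB₀ : B.Nonempty) {t : ℝ}
    (ht : t ∈ Icc (0:ℝ) 1) : (SigK A B t).Nonempty := by
  obtain ⟨a, ha⟩ := hA₀
  obtain ⟨u, hu⟩ := metricProj_nonempty hB hB₀ a
  obtain ⟨x, hx⟩ := hω a u t ht
  exact ⟨x, mem_SigK.2 ⟨(a, u), .inl ⟨ha, hu⟩, hx⟩⟩

lemma hausdorffEDist_SigK_ne_top (hA : IsCompact A) (hA₀ : A.Nonempty) (hB : IsCompact B)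
    (hB₀ : B.Nonempty) {s t : ℝ} (hs : s ∈ Icc (0:ℝ) 1) (ht : t ∈ Icc (0:ℝ) 1) :
    hausdorffEDist (SigK A B s) (SigK A B t) ≠ ⊤ := by
  have hAB := hausdorffEDist_ne_top_of_nonempty_of_bounded hA₀ hB₀ hA.isBounded hB.isBounded
  exact hausdorffEDist_ne_top_of_nonempty_of_bounded (SigK_nonempty hω hA₀ hB hB₀ hs)
    (SigK_nonempty hω hA₀ hB hB₀ ht)
    (hA.isBounded.cthickening.subset (SigK_subset_cthickening hAB hs.2))
    (hA.isBounded.cthickening.subset (SigK_subset_cthickening hAB ht.2))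

lemma exists_mem_SigK_dist_le (hAB : hausdorffEDist A B ≠ ⊤) {s t : ℝ} (hs : s ∈ Icc (0:ℝ) 1)
    (ht : t ∈ Icc (0:ℝ) 1) {x : X} (hx : x ∈ SigK A B s) :
    ∃ y ∈ SigK A B t, dist x y ≤ |t - s| * hausdorffDist A B := by
  obtain ⟨p, hp, hx⟩ := mem_SigK.1 hx
  obtain ⟨y, hy, hxy⟩ := exists_mem_omegaSet_dist_le hω hs ht hx
  refine ⟨y, mem_SigK.2 ⟨p, hp, hy⟩, hxy.trans ?_⟩
  exact mul_le_mul_of_nonneg_left (dist_le_hausdorffDist_of_mem_projPairs hAB hp) (abs_nonneg _)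

lemma hausdorffDist_SigK_le (hAB : hausdorffEDist A B ≠ ⊤) {s t : ℝ} (hs : s ∈ Icc (0:ℝ) 1)
    (ht : t ∈ Icc (0:ℝ) 1) :
    hausdorffDist (SigK A B s) (SigK A B t) ≤ |t - s| * hausdorffDist A B :=
  hausdorffDist_le_of_mem_dist (mul_nonneg (abs_nonneg _) hausdorffDist_nonneg)
    (fun _ hx => exists_mem_SigK_dist_le hω hAB hs ht hx)
    (fun _ hx => abs_sub_comm s t ▸ exists_mem_SigK_dist_le hω hAB ht hs hx)

lemma sub_mul_le_hausdorffDist_SigK_of_infDist_eq (hA : IsCompact A) (hA₀ : A.Nonempty)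
    (hB : IsCompact B) (hB₀ : B.Nonempty) {a : X} (ha : a ∈ A)
    (hfar : infDist a B = hausdorffDist A B) {s t : ℝ} (hs : s ∈ Icc (0:ℝ) 1)
    (ht : t ∈ Icc (0:ℝ) 1) :
    (t - s) * hausdorffDist A B ≤ hausdorffDist (SigK A B s) (SigK A B t) := by
  have hAB := hausdorffEDist_ne_top_of_nonempty_of_bounded hA₀ hB₀ hA.isBounded hB.isBounded
  obtain ⟨u, hu⟩ := metricProj_nonempty hB hB₀ a
  obtain ⟨x, hx⟩ := hω a u s hs
  calc (t - s) * hausdorffDist A B ≤ infDist x (SigK A B t) :=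
        (le_infDist (SigK_nonempty hω hA₀ hB hB₀ ht)).2 fun y hy =>
          sub_mul_le_dist_of_mem_SigK hAB hfar hu hx hy ht.2
    _ ≤ hausdorffDist (SigK A B s) (SigK A B t) :=
        infDist_le_hausdorffDist_of_mem (mem_SigK.2 ⟨(a, u), .inl ⟨ha, hu⟩, hx⟩)
          (hausdorffEDist_SigK_ne_top hω hA hA₀ hB hB₀ hs ht)

lemma sub_mul_le_hausdorffDist_SigK (hA : IsCompact A) (hA₀ : A.Nonempty) (hB : IsCompact B)
    (hB₀ : B.Nonempty) {s t : ℝ} (hs : s ∈ Icc (0:ℝ) 1) (ht : t ∈ Icc (0:ℝ) 1) :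
    (t - s) * hausdorffDist A B ≤ hausdorffDist (SigK A B s) (SigK A B t) := by
  rcases exists_infDist_eq_hausdorffDist hA hA₀ hB hB₀ with ⟨a, ha, hfar⟩ | ⟨b, hb, hfar⟩
  · exact sub_mul_le_hausdorffDist_SigK_of_infDist_eq hω hA hA₀ hB hB₀ ha hfar hs ht
  · have := sub_mul_le_hausdorffDist_SigK_of_infDist_eq hω hB hB₀ hA hA₀ hb
      (hfar.trans hausdorffDist_comm) (Icc.mem_iff_one_sub_mem.1 ht)
      (Icc.mem_iff_one_sub_mem.1 hs)
    rwa [sub_sub_sub_cancel_left, hausdorffDist_comm, SigK_one_sub, SigK_one_sub,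
      hausdorffDist_comm (s := SigK A B t)] at this

lemma hausdorffDist_SigK (hA : IsCompact A) (hA₀ : A.Nonempty) (hB : IsCompact B)
    (hB₀ : B.Nonempty) {s t : ℝ} (hs : s ∈ Icc (0:ℝ) 1) (ht : t ∈ Icc (0:ℝ) 1) :
    hausdorffDist (SigK A B s) (SigK A B t) = |t - s| * hausdorffDist A B := by
  have hAB := hausdorffEDist_ne_top_of_nonempty_of_bounded hA₀ hB₀ hA.isBounded hB.isBounded
  refine (hausdorffDist_SigK_le hω hAB hs ht).antisymm ?_
  rw [abs_eq_max_neg, max_mul_of_nonneg _ _ hausdorffDist_nonneg, neg_sub]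
  exact max_le (sub_mul_le_hausdorffDist_SigK hω hA hA₀ hB hB₀ hs ht)
    (hausdorffDist_comm (s := SigK A B t) ▸ sub_mul_le_hausdorffDist_SigK hω hA hA₀ hB hB₀ ht hs)

end SigK

end

theorem SigK_is_geodesic_general {X : Type*} [MetricSpace X]
    (σ : X → X → ℝ → X)
    (h0 : ∀ x y, σ x y 0 = x) (h1 : ∀ x y, σ x y 1 = y)
    (hgeo : ∀ x y, ∀ s ∈ Set.Icc (0:ℝ) 1, ∀ t ∈ Set.Icc (0:ℝ) 1,
      dist (σ x y s) (σ x y t) = |t - s| * dist x y)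
    (A B : Set X) (hAne : A.Nonempty) (hAcp : IsCompact A)
    (hBne : B.Nonempty) (hBcp : IsCompact B) :
    SigK A B 0 = A ∧ SigK A B 1 = B ∧
      ∀ s ∈ Set.Icc (0:ℝ) 1, ∀ t ∈ Set.Icc (0:ℝ) 1,
        Metric.hausdorffDist (SigK A B s) (SigK A B t) =
          |t - s| * Metric.hausdorffDist A B := by
  have hω : ∀ x y : X, ∀ t ∈ Set.Icc (0:ℝ) 1, (omegaSet x y t).Nonempty :=
    fun x y _ ht => ⟨_, mem_omegaSet_of_bicombing h0 h1 hgeo x y ht⟩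
  exact ⟨SigK_zero hBcp hBne, SigK_one hAcp hAne,
    fun s hs t ht => hausdorffDist_SigK hω hAcp hAne hBcp hBne hs ht⟩

/-- in a proper metric space with a geodesic bicombing, Σ(A,B,·)
is a linearly reparametrized geodesic from A to B in (K(X), d_H). -/
theorem SigK_is_geodesic {X : Type*} [MetricSpace X] [ProperSpace X]
    (σ : X → X → ℝ → X)
    (h0 : ∀ x y, σ x y 0 = x) (h1 : ∀ x y, σ x y 1 = y)
    (hgeo : ∀ x y, ∀ s ∈ Set.Icc (0:ℝ) 1, ∀ t ∈ Set.Icc (0:ℝ) 1,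
      dist (σ x y s) (σ x y t) = |t - s| * dist x y)
    (A B : Set X) (hAne : A.Nonempty) (hAcp : IsCompact A)
    (hBne : B.Nonempty) (hBcp : IsCompact B) :
    SigK A B 0 = A ∧ SigK A B 1 = B ∧
      ∀ s ∈ Set.Icc (0:ℝ) 1, ∀ t ∈ Set.Icc (0:ℝ) 1,
        Metric.hausdorffDist (SigK A B s) (SigK A B t) =
          |t - s| * Metric.hausdorffDist A B :=
  SigK_is_geodesic_general σ h0 h1 hgeo A B hAne hAcp hBne hBcp
end
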